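/- arXiv:2207.04247 — 2 statements merged into one kernel-verified Lean document; each statement's English description precedes it below -/
import Mathlib

section
/- Let R be a commutative ring, x_1,...,x_d elements of R, and (B_w) a family of R-algebras indexed by W with an ultrafilter such that x_1,...,x_d is a regular sequence on B_w for almost all w. Let B = ulim_w B_w. If z ∈ B and positive integers s, t satisfy (x_1 ⋯ x_d)^s z ∈ (x_1^{s+t},...,x_d^{s+t})B, then z ∈ (x_1^t,...,x_d^t)B. Consequently, the natural map from the top local cohomology (computed as the Čech cohomology colimit) H^d_{(x)}(B) to ulim_w H^d_{(x)}(B_w) is injective. -/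
section WSeqStuff

variable {A : Type*} [CommRing A]

/-- Elementwise formulation of a weakly regular sequence relative to an ideal. -/
def WSeq {A : Type*} [CommRing A] (I : Ideal A) : List A → Prop
  | [] => True
  | r :: l => (∀ z, r * z ∈ I → z ∈ I) ∧ WSeq (I ⊔ Ideal.span {r}) l

lemma WSeq.congr_ideal {I J : Ideal A} {l : List A} (h : WSeq I l) (hIJ : I = J) :
    WSeq J l := hIJ ▸ h

lemma nzd_pow {I : Ideal A} {r : A} (h : ∀ z, r * z ∈ I → z ∈ I) :
    ∀ n z, r ^ n * z ∈ I → z ∈ I := by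
  intro n
  induction n with
  | zero => intro z hz; simpa using hz
  | succ n ih =>
    intro z hz
    rw [pow_succ, mul_assoc] at hz
    exact h z (ih _ hz)

lemma wseq_transfer (l : List A) : ∀ (I J : Ideal A) (f : A),
    (∀ u, u ∈ I → f * u ∈ J) → (∀ z, f * z ∈ J → z ∈ I) →
    WSeq I l → WSeq (J ⊔ Ideal.span {f}) l → WSeq J l := by
  induction l with
  | nil => intros; trivial
  | cons r l ih =>
    intro I J f h1 h2 h3 h4
    obtain ⟨h3h, h3t⟩ := h3
    obtain ⟨h4h, h4t⟩ := h4
    constructor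
    · intro z hz
      have hz' : z ∈ J ⊔ Ideal.span {f} := h4h z (Submodule.mem_sup_left hz)
      obtain ⟨p, hp, q, hq, rfl⟩ := Submodule.mem_sup.mp hz'
      obtain ⟨u, rfl⟩ := Ideal.mem_span_singleton'.mp hq
      have h5 : f * (r * u) ∈ J := by
        have he : r * (p + u * f) - r * p = f * (r * u) := by ring
        rw [← he]
        exact Submodule.sub_mem _ hz (Ideal.mul_mem_left _ _ hp)
      have h6 : u ∈ I := h3h u (h2 _ h5)
      exact Submodule.add_mem _ hp (by rw [mul_comm]; exact h1 u h6)
    · refine (ih (I ⊔ Ideal.span {r}) (J ⊔ Ideal.span {r}) f ?_ ?_ h3t ?_)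
      · intro u hu
        obtain ⟨p, hp, q, hq, rfl⟩ := Submodule.mem_sup.mp hu
        obtain ⟨s, rfl⟩ := Ideal.mem_span_singleton'.mp hq
        have : f * (p + s * r) = f * p + (f * s) * r := by ring
        rw [this]
        exact Submodule.add_mem _ (Submodule.mem_sup_left (h1 p hp))
          (Submodule.mem_sup_right (Ideal.mem_span_singleton'.mpr ⟨f * s, rfl⟩))
      · intro z hz
        obtain ⟨q, hq, q2, hq2, hdec⟩ := Submodule.mem_sup.mp hz
        obtain ⟨u, rfl⟩ := Ideal.mem_span_singleton'.mp hq2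
        have hru : r * u ∈ J ⊔ Ideal.span {f} := by
          have : r * u = f * z - q := by rw [← hdec]; ring
          rw [this]
          exact Submodule.sub_mem _ (Submodule.mem_sup_right
            (Ideal.mem_span_singleton'.mpr ⟨z, mul_comm z f⟩)) (Submodule.mem_sup_left hq)
        have hu : u ∈ J ⊔ Ideal.span {f} := h4h u hru
        obtain ⟨q', hq', q3, hq3, hdec'⟩ := Submodule.mem_sup.mp hu
        obtain ⟨v, rfl⟩ := Ideal.mem_span_singleton'.mp hq3
        have hfz : f * (z - v * r) ∈ J := by
          have : f * (z - v * r) = q + q' * r := by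
            rw [show q = f * z - u * r by rw [← hdec]; ring, show u = q' + v * f by rw [← hdec']]
            ring
          rw [this]
          exact Submodule.add_mem _ hq (Ideal.mul_mem_right _ _ hq')
        have := h2 _ hfz
        have : z = (z - v * r) + v * r := by ring
        rw [this]
        exact Submodule.add_mem _ (Submodule.mem_sup_left (h2 _ hfz))
          (Submodule.mem_sup_right (Ideal.mem_span_singleton'.mpr ⟨v, rfl⟩))
      · exact h4t.congr_ideal (sup_right_comm J (Ideal.span {f}) (Ideal.span {r}))

lemma wseq_pow_head {r : A} {l : List A} {I : Ideal A} (h : WSeq I (r :: l)) :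
    ∀ n : ℕ, WSeq I (r ^ (n + 1) :: l) := by
  intro n
  induction n with
  | zero => simpa [pow_one] using h
  | succ n ih =>
    obtain ⟨hh, ht⟩ := h
    obtain ⟨ihh, iht⟩ := ih
    constructor
    · exact fun z hz => nzd_pow hh (n + 2) z hz
    · refine wseq_transfer l (I ⊔ Ideal.span {r}) (I ⊔ Ideal.span {r ^ (n + 2)}) (r ^ (n + 1))
        ?_ ?_ ht ?_
      · intro u hu
        obtain ⟨p, hp, q, hq, rfl⟩ := Submodule.mem_sup.mp hu
        obtain ⟨s, rfl⟩ := Ideal.mem_span_singleton'.mp hq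
        have : r ^ (n + 1) * (p + s * r) = r ^ (n + 1) * p + s * r ^ (n + 2) := by ring
        rw [this]
        exact Submodule.add_mem _ (Submodule.mem_sup_left (Ideal.mul_mem_left _ _ hp))
          (Submodule.mem_sup_right (Ideal.mem_span_singleton'.mpr ⟨s, rfl⟩))
      · intro z hz
        obtain ⟨p, hp, q, hq, hdec⟩ := Submodule.mem_sup.mp hz
        obtain ⟨u, rfl⟩ := Ideal.mem_span_singleton'.mp hq
        have h5 : r ^ (n + 1) * (z - u * r) ∈ I := by
          have : r ^ (n + 1) * (z - u * r) = p := by linear_combination -hdec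
          rw [this]; exact hp
        have := nzd_pow hh (n + 1) _ h5
        have hz' : z = (z - u * r) + u * r := by ring
        rw [hz']
        exact Submodule.add_mem _ (Submodule.mem_sup_left this)
          (Submodule.mem_sup_right (Ideal.mem_span_singleton'.mpr ⟨u, rfl⟩))
      · refine iht.congr_ideal ?_
        have hle : Ideal.span {r ^ (n + 2)} ≤ Ideal.span {r ^ (n + 1)} :=
          Ideal.span_le.mpr (by
            intro a ha
            rw [Set.mem_singleton_iff] at ha
            subst ha
            exact Ideal.mem_span_singleton.mpr ⟨r, by ring⟩)
        rw [sup_assoc, sup_eq_right.mpr hle]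

lemma wseq_pow (l : List (A × ℕ)) : ∀ I : Ideal A, (∀ p ∈ l, 0 < p.2) →
    WSeq I (l.map Prod.fst) → WSeq I (l.map fun p => p.1 ^ p.2) := by
  induction l with
  | nil => intros; trivial
  | cons p l ih =>
    intro I hpos h
    obtain ⟨n, hn⟩ : ∃ n, p.2 = n + 1 :=
      ⟨p.2 - 1, (Nat.succ_pred_eq_of_pos (hpos p (List.mem_cons_self))).symm⟩
    have h2 : WSeq I (p.1 ^ p.2 :: l.map Prod.fst) := by
      rw [hn]; exact wseq_pow_head h n
    exact ⟨h2.1, ih _ (fun q hq => hpos q (List.mem_cons_of_mem _ hq)) h2.2⟩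

lemma wseq_append {l₁ l₂ : List A} : ∀ I : Ideal A, WSeq I (l₁ ++ l₂) →
    WSeq I l₁ ∧ WSeq (I ⊔ Ideal.ofList l₁) l₂ := by
  induction l₁ with
  | nil =>
    intro I h
    exact ⟨trivial, by simpa [Ideal.ofList_nil] using h⟩
  | cons r l ih =>
    intro I h
    obtain ⟨hh, ht⟩ := h
    obtain ⟨w1, w2⟩ := ih _ ht
    refine ⟨⟨hh, w1⟩, w2.congr_ideal ?_⟩
    rw [Ideal.ofList_cons, ← sup_assoc]

lemma ofList_ofFn {n : ℕ} (g : Fin n → A) :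
    Ideal.ofList (List.ofFn g) = Ideal.span (Set.range g) := by
  unfold Ideal.ofList
  congr 1
  ext a
  simp [List.mem_ofFn]

lemma wseq_of_cond (l : List A) : ∀ I : Ideal A,
    (∀ (i : ℕ) (hi : i < l.length) (z : A),
      l[i] * z ∈ I ⊔ Ideal.ofList (l.take i) → z ∈ I ⊔ Ideal.ofList (l.take i)) →
    WSeq I l := by
  induction l with
  | nil => intros; trivial
  | cons r l ih =>
    intro I H
    constructor
    · intro z hz
      have := H 0 (by simp) z (by simpa [Ideal.ofList_nil] using hz)
      simpa [Ideal.ofList_nil] using this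
    · refine ih _ ?_
      intro i hi z hz
      have := H (i + 1) (by simpa using hi) z (by
        simpa [List.take_succ_cons, Ideal.ofList_cons, sup_assoc] using hz)
      simpa [List.take_succ_cons, Ideal.ofList_cons, sup_assoc] using this

lemma wseq_of_isWeaklyRegular {l : List A} (h : RingTheory.Sequence.IsWeaklyRegular A l) :
    WSeq (⊥ : Ideal A) l := by
  apply wseq_of_cond
  intro i hi z hz
  have hsm := h.regular_mod_prev i hi
  set N : Submodule A A := Ideal.ofList (l.take i) • ⊤ with hNdef
  have hN : N = Ideal.ofList (l.take i) := by
    rw [hNdef]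
    apply le_antisymm
    · exact Submodule.smul_le.mpr fun r hr n _ => by
        rw [smul_eq_mul]; exact Ideal.mul_mem_right _ _ hr
    · intro a ha
      simpa using Submodule.smul_mem_smul ha (Submodule.mem_top (x := (1 : A)))
  have hz' : l[i] * z ∈ Ideal.ofList (l.take i) := by simpa using hz
  have hmk : Submodule.Quotient.mk (p := N) z = 0 := by
    apply hsm
    show l[i] • Submodule.Quotient.mk (p := N) z = l[i] • (0 : A ⧸ N)
    rw [smul_zero, ← Submodule.Quotient.mk_smul, smul_eq_mul]
    exact (Submodule.Quotient.mk_eq_zero N).mpr (by rw [hN]; exact hz')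
  have := (Submodule.Quotient.mk_eq_zero N).mp hmk
  rw [hN] at this
  simpa using this

lemma syzygy : ∀ (n : ℕ) (v : Fin n → A) (I : Ideal A), WSeq I (List.ofFn v) →
    ∀ f : Fin n → A, (∑ i, f i * v i) ∈ I →
    ∃ h : Fin n → Fin n → A, (∀ j, h j j = 0) ∧ ∀ j, (f j - ∑ k, h j k * v k) ∈ I := by
  intro n
  induction n with
  | zero =>
    intro v I _ f _
    exact ⟨fun _ _ => 0, fun j => rfl, fun j => j.elim0⟩
  | succ n ih =>
    intro v I hw f hf
    rw [List.ofFn_succ', List.concat_eq_append] at hw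
    obtain ⟨hw1, hw2⟩ := wseq_append _ hw
    set J := Ideal.ofList (List.ofFn fun i : Fin n => v i.castSucc) with hJ
    have hlast : ∀ z, v (Fin.last n) * z ∈ I ⊔ J → z ∈ I ⊔ J := hw2.1
    have hvmem : ∀ k : Fin n, v k.castSucc ∈ J := fun k =>
      Ideal.subset_span ((List.mem_ofFn.mpr ⟨k, rfl⟩))
    have h1 : v (Fin.last n) * f (Fin.last n) ∈ I ⊔ J := by
      have hsum : ∑ i, f i * v i =
          (∑ k : Fin n, f k.castSucc * v k.castSucc) + f (Fin.last n) * v (Fin.last n) :=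
        Fin.sum_univ_castSucc (f := fun i => f i * v i)
      have he : v (Fin.last n) * f (Fin.last n) =
          (∑ i, f i * v i) - ∑ k : Fin n, f k.castSucc * v k.castSucc := by
        rw [hsum]; ring
      rw [he]
      refine Submodule.sub_mem _ (Submodule.mem_sup_left hf) (Submodule.mem_sup_right ?_)
      exact Ideal.sum_mem _ fun k _ => Ideal.mul_mem_left _ _ (hvmem k)
    obtain ⟨p, hp, q, hq, hpq⟩ := Submodule.mem_sup.mp (hlast _ h1)
    rw [hJ, ofList_ofFn] at hq
    obtain ⟨g, hg⟩ := (Submodule.mem_span_range_iff_exists_fun A).mp hq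
    simp only [smul_eq_mul] at hg
    set f' : Fin n → A := fun k => f k.castSucc + g k * v (Fin.last n) with hf'
    have hrel : (∑ k, f' k * v k.castSucc) ∈ I := by
      have he : (∑ k, f' k * v k.castSucc) = (∑ i, f i * v i) - p * v (Fin.last n) := by
        calc ∑ k, f' k * v k.castSucc
            = (∑ k : Fin n, f k.castSucc * v k.castSucc)
              + (∑ k : Fin n, g k * v k.castSucc) * v (Fin.last n) := by
              rw [Finset.sum_mul, ← Finset.sum_add_distrib]
              exact Finset.sum_congr rfl fun k _ => by rw [hf']; ring
          _ = (∑ i, f i * v i) - p * v (Fin.last n) := by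
              rw [Fin.sum_univ_castSucc (f := fun i => f i * v i), hg,
                show f (Fin.last n) = p + q from hpq.symm]
              ring
      rw [he]
      exact Submodule.sub_mem _ hf (Ideal.mul_mem_right _ _ hp)
    obtain ⟨h', hd', hm'⟩ := ih (fun k => v k.castSucc) I hw1 f' hrel
    refine ⟨fun j => Fin.lastCases (fun k => Fin.lastCases 0 (fun k' => g k') k)
      (fun j' k => Fin.lastCases (-(g j')) (fun k' => h' j' k') k) j, ?_, ?_⟩
    · intro j
      refine Fin.lastCases ?_ ?_ j
      · simp
      · intro j'
        simp [hd' j']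
    · intro j
      refine Fin.lastCases ?_ ?_ j
      · have hkey : (f (Fin.last n) - ∑ k : Fin (n + 1),
            (Fin.lastCases (motive := fun _ => A) 0 (fun k' => g k') k) * v k) = p := by
          rw [Fin.sum_univ_castSucc
            (f := fun k => (Fin.lastCases (motive := fun _ => A) 0 (fun k' => g k') k) * v k)]
          simp only [Fin.lastCases_castSucc, Fin.lastCases_last]
          rw [hg, show f (Fin.last n) = p + q from hpq.symm]
          ring
        simpa [hkey] using hp
      · intro j'
        have hkey : (f j'.castSucc - ∑ k : Fin (n + 1),
            (Fin.lastCases (motive := fun _ => A) (-(g j')) (fun k' => h' j' k') k) * v k)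
            = f' j' - ∑ k : Fin n, h' j' k * v k.castSucc := by
          rw [Fin.sum_univ_castSucc
            (f := fun k => (Fin.lastCases (motive := fun _ => A) (-(g j'))
              (fun k' => h' j' k') k) * v k)]
          simp only [Fin.lastCases_castSucc, Fin.lastCases_last]
          rw [hf']
          ring
        simpa [hkey] using hm' j'
lemma colon_mid {n : ℕ} {v : Fin n → A} {I : Ideal A} (hw : WSeq I (List.ofFn v))
    (j : Fin n) (w : A)
    (hz : v j * w ∈ I ⊔ Ideal.span (Set.range fun k => if k = j then 0 else v k)) :
    w ∈ I ⊔ Ideal.span (Set.range fun k => if k = j then 0 else v k) := by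
  classical
  set v₀ : Fin n → A := fun k => if k = j then 0 else v k with hv₀
  obtain ⟨p, hp, q, hq, hpq⟩ := Submodule.mem_sup.mp hz
  obtain ⟨f, hf⟩ := (Submodule.mem_span_range_iff_exists_fun A).mp hq
  simp only [smul_eq_mul] at hf
  set F : Fin n → A := fun k => if k = j then w else -(f k) with hF
  have hrel : (∑ k, F k * v k) ∈ I := by
    have he : (∑ k, F k * v k) = p := by
      have h2 : (∑ k, F k * v k) + (∑ k, f k * v₀ k) = w * v j := by
        rw [← Finset.sum_add_distrib]
        rw [Finset.sum_congr rfl (g := fun k => if k = j then w * v j else 0)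
          (fun k _ => by by_cases hk : k = j <;> simp [hF, hv₀, hk])]
        simp
      rw [hf] at h2
      linear_combination h2 - hpq
    rw [he]; exact hp
  obtain ⟨h, hd, hm⟩ := syzygy n v I hw F hrel
  have hmj := hm j
  rw [show F j = w from by simp [hF]] at hmj
  have hsum : (∑ k, h j k * v k) ∈ Ideal.span (Set.range v₀) := by
    refine Ideal.sum_mem _ fun k _ => ?_
    by_cases hk : k = j
    · subst hk
      rw [hd k, zero_mul]
      exact Submodule.zero_mem _
    · have : v k = v₀ k := by simp [hv₀, hk]
      rw [this]
      exact Ideal.mul_mem_left _ _ (Ideal.subset_span ⟨k, rfl⟩)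
  have : w = (w - ∑ k, h j k * v k) + ∑ k, h j k * v k := by ring
  rw [this]
  exact Submodule.add_mem _ (Submodule.mem_sup_left hmj) (Submodule.mem_sup_right hsum)
lemma keyCC {n : ℕ} {y : Fin n → A} (hreg : WSeq (⊥ : Ideal A) (List.ofFn y))
    {b a : Fin n → ℕ} (hba : ∀ i, b i ≤ a i) {z : A}
    (hz : (∏ i, y i ^ b i) * z ∈ Ideal.span (Set.range fun i => y i ^ a i)) :
    z ∈ Ideal.span (Set.range fun i => y i ^ (a i - b i)) := by
  classical
  suffices H : ∀ (N : ℕ) (b a : Fin n → ℕ), (∑ i, b i) ≤ N → (∀ i, b i ≤ a i) → ∀ z : A,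
      (∏ i, y i ^ b i) * z ∈ Ideal.span (Set.range fun i => y i ^ a i) →
      z ∈ Ideal.span (Set.range fun i => y i ^ (a i - b i)) by
    exact H _ b a le_rfl hba z hz
  intro N
  induction N with
  | zero =>
    intro b a hN hba z hz
    have hb : ∀ i, b i = 0 := fun i => Nat.le_zero.mp (le_trans
      (Finset.single_le_sum (f := b) (fun _ _ => Nat.zero_le _) (Finset.mem_univ i)) hN)
    have h1 : (∏ i, y i ^ b i) = 1 := by simp [hb]
    rw [h1, one_mul] at hz
    simpa [hb] using hz
  | succ N ihN =>
    intro b a hN hba z hz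
    by_cases hb0 : ∀ i, b i = 0
    · have h1 : (∏ i, y i ^ b i) = 1 := by simp [hb0]
      rw [h1, one_mul] at hz
      simpa [hb0] using hz
    push_neg at hb0
    obtain ⟨j, hj⟩ := hb0
    by_cases ha0 : ∃ i, a i = 0
    · obtain ⟨i0, hi0⟩ := ha0
      have h1 : (1 : A) ∈ Ideal.span (Set.range fun i => y i ^ (a i - b i)) :=
        Ideal.subset_span ⟨i0, by simp [hi0]⟩
      simpa using Ideal.mul_mem_left _ z h1
    push_neg at ha0
    set e : Fin n → ℕ := fun i => if i = j then 1 else a i with he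
    set v : Fin n → A := fun i => y i ^ e i with hv
    have hpos : ∀ p ∈ (List.ofFn fun i => (y i, e i)), 0 < p.2 := by
      intro p hp
      obtain ⟨i, hi⟩ := List.mem_ofFn.mp hp
      rw [← hi]
      show 0 < e i
      by_cases hij : i = j <;> simp [he, hij]
      exact Nat.pos_of_ne_zero (ha0 i)
    have hbase : WSeq (⊥ : Ideal A) ((List.ofFn fun i => (y i, e i)).map Prod.fst) := by
      rw [List.map_ofFn]; exact hreg
    have hvW : WSeq (⊥ : Ideal A) (List.ofFn v) := by
      have h2 := wseq_pow _ _ hpos hbase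
      rw [List.map_ofFn] at h2
      exact h2
    obtain ⟨c, hc⟩ := (Submodule.mem_span_range_iff_exists_fun A).mp hz
    simp only [smul_eq_mul] at hc
    set b' : Fin n → ℕ := Function.update b j (b j - 1) with hb'
    set a' : Fin n → ℕ := Function.update a j (a j - 1) with ha'
    have hbj : b j = (b j - 1) + 1 := (Nat.succ_pred_eq_of_pos (Nat.pos_of_ne_zero hj)).symm
    have haj : a j = (a j - 1) + 1 := (Nat.succ_pred_eq_of_pos (Nat.pos_of_ne_zero (ha0 j))).symm
    have hprod : (∏ i, y i ^ b i) = y j * ∏ i, y i ^ b' i := by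
      have h1 : ∏ i, y i ^ b i = (∏ i ∈ Finset.univ \ {j}, y i ^ b i) * y j ^ b j :=
        Finset.prod_eq_prod_diff_singleton_mul (Finset.mem_univ j) _
      have hupd : (fun i => y i ^ b' i) =
          Function.update (fun i => y i ^ b i) j (y j ^ (b j - 1)) := by
        funext i
        by_cases hij : i = j
        · rw [hij]; simp [hb']
        · simp [hb', hij, Function.update_of_ne hij]
      have h2 : ∏ i, y i ^ b' i = y j ^ (b j - 1) * ∏ i ∈ Finset.univ \ {j}, y i ^ b i := by
        rw [hupd]
        exact Finset.prod_update_of_mem (Finset.mem_univ j) _ _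
      rw [h1, h2]
      conv_lhs => rw [hbj]
      rw [pow_succ]
      ring
    set w : A := (∏ i, y i ^ b' i) * z - c j * y j ^ (a j - 1) with hwdef
    set v₀ : Fin n → A := fun k => if k = j then 0 else v k with hv₀
    have h4 : ∑ i, c i * y i ^ a i = (∑ i, c i * v₀ i) + c j * y j ^ a j := by
      have hterm : ∀ i ∈ Finset.univ, c i * y i ^ a i =
          c i * v₀ i + (if i = j then c j * y j ^ a j else 0) := by
        intro i _
        by_cases hij : i = j
        · simp [hv₀, hv, hij]
        · simp [hv₀, hv, he, hij]
      rw [Finset.sum_congr rfl hterm, Finset.sum_add_distrib,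
        Finset.sum_ite_eq' Finset.univ j (fun _ => c j * y j ^ a j)]
      simp
    have hyw : y j * w ∈ (⊥ : Ideal A) ⊔ Ideal.span (Set.range v₀) := by
      have heq : y j * w = ∑ i, c i * v₀ i := by
        have h5 : y j * y j ^ (a j - 1) = y j ^ a j := by
          conv_rhs => rw [haj]
          rw [pow_succ]; ring
        calc y j * w = (y j * ∏ i, y i ^ b' i) * z - c j * (y j * y j ^ (a j - 1)) := by
              rw [hwdef]; ring
          _ = (∏ i, y i ^ b i) * z - c j * y j ^ a j := by rw [← hprod, h5]
          _ = ∑ i, c i * v₀ i := by rw [← hc, h4]; ring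
      rw [heq]
      refine Submodule.mem_sup_right (Ideal.sum_mem _ fun i _ => ?_)
      by_cases hij : i = j
      · rw [show v₀ i = 0 by simp [hv₀, hij], mul_zero]
        exact Submodule.zero_mem _
      · exact Ideal.mul_mem_left _ _ (Ideal.subset_span ⟨i, rfl⟩)
    have hvj : v j = y j := by simp [hv, he]
    have hw2 : w ∈ (⊥ : Ideal A) ⊔ Ideal.span (Set.range v₀) :=
      colon_mid hvW j w (by rw [hvj]; exact hyw)
    rw [bot_sup_eq] at hw2
    have hsub : Ideal.span (Set.range v₀) ≤ Ideal.span (Set.range fun i => y i ^ a' i) := by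
      rw [Ideal.span_le]
      rintro _ ⟨k, rfl⟩
      by_cases hkj : k = j
      · rw [show v₀ k = 0 by simp [hv₀, hkj]]
        exact Submodule.zero_mem _
      · have hk : v₀ k = y k ^ a' k := by
          simp [hv₀, hv, he, ha', hkj, Function.update_of_ne hkj]
        rw [hk]
        exact Ideal.subset_span ⟨k, rfl⟩
    have hz' : (∏ i, y i ^ b' i) * z ∈ Ideal.span (Set.range fun i => y i ^ a' i) := by
      have h6 : (∏ i, y i ^ b' i) * z = w + c j * y j ^ (a j - 1) := by rw [hwdef]; ring
      rw [h6]
      refine Submodule.add_mem _ (hsub hw2) ?_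
      refine Ideal.mul_mem_left _ _ (Ideal.subset_span ⟨j, ?_⟩)
      simp [ha']
    have hsum' : (∑ i, b' i) ≤ N := by
      have h7 : ∑ i, b' i = (b j - 1) + ∑ i ∈ Finset.univ \ {j}, b i := by
        rw [hb']
        exact Finset.sum_update_of_mem (Finset.mem_univ j) _ _
      have h8 : ∑ i, b i = (∑ i ∈ Finset.univ \ {j}, b i) + b j :=
        Finset.sum_eq_sum_sdiff_singleton_add (Finset.mem_univ j) _
      have h9 := Nat.pos_of_ne_zero hj
      omega
    have hba' : ∀ i, b' i ≤ a' i := by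
      intro i
      by_cases hij : i = j
      · rw [hij]
        simp only [hb', ha', Function.update_self]
        exact Nat.sub_le_sub_right (hba j) 1
      · simp only [hb', ha', Function.update_of_ne hij]
        exact hba i
    have hfin := ihN b' a' hsum' hba' z hz'
    have hfun : (fun i => y i ^ (a' i - b' i)) = fun i => y i ^ (a i - b i) := by
      funext i
      by_cases hij : i = j
      · rw [hij]
        have h10 := hba j
        have h11 := Nat.pos_of_ne_zero hj
        have h12 : a' j - b' j = a j - b j := by
          simp only [ha', hb', Function.update_self]
          omega
        rw [h12]
      · simp only [ha', hb', Function.update_of_ne hij]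
    rwa [hfun] at hfin
lemma keyCC' {n : ℕ} {y : Fin n → A} (hreg : WSeq (⊥ : Ideal A) (List.ofFn y))
    (s t : ℕ) (z : A)
    (h : (∏ i, y i) ^ s * z ∈ Ideal.span (Set.range fun i => y i ^ (s + t))) :
    z ∈ Ideal.span (Set.range fun i => y i ^ t) := by
  rw [← Finset.prod_pow] at h
  have h2 := keyCC hreg (b := fun _ => s) (a := fun _ => s + t)
    (fun _ => Nat.le_add_right s t) h
  simpa using h2

lemma choose_sum {n : ℕ} {v : Fin n → A} {z : A} (h : z ∈ Ideal.span (Set.range v)) :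
    z = ∑ i, Classical.choose ((Submodule.mem_span_range_iff_exists_fun A).mp h) i * v i := by
  have h2 := Classical.choose_spec ((Submodule.mem_span_range_iff_exists_fun A).mp h)
  simp only [smul_eq_mul] at h2
  exact h2.symm


end WSeqStuff


/-- Colon-capturing in an ultraproduct of algebras on which `x_1,…,x_d` is almost always
a regular sequence, and the resulting injectivity of the natural map on top local
cohomology (expressed via the Čech vanishing criterion on classes `[z/(x_1⋯x_d)^t]`). -/
theorem ultraproduct_colon_capturing (R : Type*) [CommRing R] (d : ℕ) (x : Fin d → R)
    (W : Type*) (U : Ultrafilter W)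
    (B : W → Type*) [∀ w, CommRing (B w)] [∀ w, Algebra R (B w)]
    (hreg : {w | RingTheory.Sequence.IsRegular (B w)
        (List.ofFn fun i => algebraMap R (B w) (x i))} ∈ U) :
    (∀ (z : ∀ w, B w) (s t : ℕ), 0 < s → 0 < t →
      (∃ c : Fin d → ∀ w, B w,
        {w | algebraMap R (B w) ((∏ i, x i) ^ s) * z w =
            ∑ i : Fin d, c i w * algebraMap R (B w) (x i ^ (s + t))} ∈ U) →
      (∃ c : Fin d → ∀ w, B w,
        {w | z w = ∑ i : Fin d, c i w * algebraMap R (B w) (x i ^ t)} ∈ U)) ∧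
    (∀ (z : ∀ w, B w) (t : ℕ),
      ({w | ∃ s : ℕ, algebraMap R (B w) ((∏ i, x i) ^ s) * z w ∈
          Ideal.span (Set.range fun i : Fin d => algebraMap R (B w) (x i ^ (s + t)))} ∈ U) →
      ∃ s : ℕ, ∃ c : Fin d → ∀ w, B w,
        {w | algebraMap R (B w) ((∏ i, x i) ^ s) * z w =
            ∑ i : Fin d, c i w * algebraMap R (B w) (x i ^ (s + t))} ∈ U) := by
  classical
  have hWS : ∀ w, RingTheory.Sequence.IsRegular (B w)
      (List.ofFn fun i => algebraMap R (B w) (x i)) →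
      WSeq (⊥ : Ideal (B w)) (List.ofFn fun i => algebraMap R (B w) (x i)) :=
    fun w hw => wseq_of_isWeaklyRegular hw.toIsWeaklyRegular
  constructor
  · rintro z s t _ _ ⟨c, hc⟩
    have hkey : ∀ w, RingTheory.Sequence.IsRegular (B w)
        (List.ofFn fun i => algebraMap R (B w) (x i)) →
        (algebraMap R (B w) ((∏ i, x i) ^ s) * z w =
          ∑ i : Fin d, c i w * algebraMap R (B w) (x i ^ (s + t))) →
        z w ∈ Ideal.span (Set.range fun i : Fin d => (algebraMap R (B w) (x i)) ^ t) := by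
      intro w hw1 hw2
      refine keyCC' (hWS w hw1) s t (z w) ?_
      have he : algebraMap R (B w) ((∏ i, x i) ^ s) = (∏ i, algebraMap R (B w) (x i)) ^ s := by
        rw [map_pow, map_prod]
      rw [← he, hw2]
      exact Ideal.sum_mem _ fun i _ => Ideal.mul_mem_left _ _
        (Ideal.subset_span ⟨i, (map_pow _ _ _).symm⟩)
    set P : ∀ w, Prop := fun w => z w ∈
      Ideal.span (Set.range fun i : Fin d => (algebraMap R (B w) (x i)) ^ t) with hP
    refine ⟨fun i w => if h : P w
      then Classical.choose ((Submodule.mem_span_range_iff_exists_fun (B w)).mp h) i else 0, ?_⟩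
    have hsub : {w | RingTheory.Sequence.IsRegular (B w)
          (List.ofFn fun i => algebraMap R (B w) (x i))} ∩
        {w | algebraMap R (B w) ((∏ i, x i) ^ s) * z w =
            ∑ i : Fin d, c i w * algebraMap R (B w) (x i ^ (s + t))} ⊆
        {w | z w = ∑ i : Fin d,
          (if h : P w then Classical.choose ((Submodule.mem_span_range_iff_exists_fun (B w)).mp h) i
            else 0) * algebraMap R (B w) (x i ^ t)} := by
      intro w hw
      have hmem : P w := hkey w hw.1 hw.2
      have hcs := choose_sum (v := fun i : Fin d => (algebraMap R (B w) (x i)) ^ t) hmem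
      show z w = _
      refine hcs.trans (Finset.sum_congr rfl fun i _ => ?_)
      rw [dif_pos hmem, map_pow]
    exact Filter.mem_of_superset (Filter.inter_mem hreg hc) hsub
  · intro z t hz
    refine ⟨0, ?_⟩
    set P : ∀ w, Prop := fun w => z w ∈
      Ideal.span (Set.range fun i : Fin d => (algebraMap R (B w) (x i)) ^ t) with hP
    refine ⟨fun i w => if h : P w
      then Classical.choose ((Submodule.mem_span_range_iff_exists_fun (B w)).mp h) i else 0, ?_⟩
    have hsub : {w | RingTheory.Sequence.IsRegular (B w)
          (List.ofFn fun i => algebraMap R (B w) (x i))} ∩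
        {w | ∃ s : ℕ, algebraMap R (B w) ((∏ i, x i) ^ s) * z w ∈
          Ideal.span (Set.range fun i : Fin d => algebraMap R (B w) (x i ^ (s + t)))} ⊆
        {w | algebraMap R (B w) ((∏ i, x i) ^ 0) * z w = ∑ i : Fin d,
          (if h : P w then Classical.choose ((Submodule.mem_span_range_iff_exists_fun (B w)).mp h) i
            else 0) * algebraMap R (B w) (x i ^ (0 + t))} := by
      intro w hw
      obtain ⟨s, hs⟩ := hw.2
      have hmem : P w := by
        rw [hP]
        refine keyCC' (hWS w hw.1) s t (z w) ?_
        have he : algebraMap R (B w) ((∏ i, x i) ^ s) =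
            (∏ i, algebraMap R (B w) (x i)) ^ s := by rw [map_pow, map_prod]
        have he2 : (fun i : Fin d => algebraMap R (B w) (x i ^ (s + t))) =
            fun i : Fin d => (algebraMap R (B w) (x i)) ^ (s + t) := by
          funext i; rw [map_pow]
        rw [← he, ← he2]
        exact hs
      have hcs := choose_sum (v := fun i : Fin d => (algebraMap R (B w) (x i)) ^ t) hmem
      show algebraMap R (B w) ((∏ i, x i) ^ 0) * z w = _
      rw [pow_zero, map_one, one_mul]
      refine hcs.trans (Finset.sum_congr rfl fun i _ => ?_)
      rw [dif_pos hmem, map_pow, Nat.zero_add]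
    exact Filter.mem_of_superset (Filter.inter_mem hreg hz) hsub
end

section
/- Let A be a finitely generated Z-subalgebra of C, and fix a non-principal ultrafilter on the set of primes together with an isomorphism ulim_p \bar{F_p} ≅ C. Then there exists a family of ring homomorphisms γ_p : A → \bar{F_p}, defined for almost all p, such that for every x ∈ A we have x = ulim_p γ_p(x) under the fixed isomorphism. -/
instance (p : Nat.Primes) : Fact (p : ℕ).Prime := ⟨p.2⟩

/-!
Present `A` as `ℤ[X₁, …, Xₙ] ⧸ (g₁, …, gₘ)` and lift the images of the `Xⱼ` in `ℂ` through `φ`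
to families `bⱼ = (bⱼ(p))ₚ`. Since `φ` commutes with polynomial evaluation,
`φ (gₖ(b)) = gₖ(X) = 0` in `ℂ`, so each of the finitely many relations `gₖ` vanishes at
`(bⱼ(p))ⱼ` for almost all `p`; for those `p`, evaluation at `(bⱼ(p))ⱼ` factors through `A`.
-/

open Filter MvPolynomial

section Ultraproduct

variable {ι : Type*} {K : ι → Type*} [∀ i, CommRing (K i)] {S : Type*} [CommRing S]
  {φ : (∀ i, K i) →+* S} {l : Filter ι}

theorem eventually_le_ker_of_fg {P : Type*} [CommRing P]
    (hφ : ∀ a, φ a = 0 → ∀ᶠ i in l, a i = 0) (g : ∀ i, P →+* K i) {I : Ideal P} (hI : I.FG)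
    (hIg : I ≤ RingHom.ker (φ.comp (RingHom.pi g))) :
    ∀ᶠ i in l, I ≤ RingHom.ker (g i) := by
  obtain ⟨G, rfl⟩ := hI
  simp only [Ideal.span_le, Set.subset_def, SetLike.mem_coe] at hIg ⊢
  exact (eventually_all_finset G).mpr fun x hx => hφ _ (hIg x hx)

theorem exists_eventually_ringHom_of_finiteType (hφs : Function.Surjective φ)
    (hφ : ∀ a, φ a = 0 → ∀ᶠ i in l, a i = 0)
    {A : Type*} [CommRing A] [Algebra.FiniteType ℤ A] (ψ : A →+* S) :
    ∃ γ : ∀ i, A → K i, (∀ᶠ i in l, ∃ g : A →+* K i, ⇑g = γ i) ∧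
      ∀ x, φ (fun i => γ i x) = ψ x := by
  obtain ⟨n, f, hf⟩ := Algebra.FiniteType.iff_quotient_mvPolynomial''.mp ‹_›
  choose b hb using fun j => hφs (ψ (f (X j)))
  let ev : ∀ i, MvPolynomial (Fin n) ℤ →+* K i := fun i => (aeval fun j => b j i).toRingHom
  have hev : ∀ P, φ (fun i => ev i P) = ψ (f P) := fun P => by
    have hpi : (fun i => ev i P) = aeval b P :=
      funext fun i => (comp_aeval_apply b (Pi.evalAlgHom ℤ K i) P).symm
    rw [hpi]
    exact congrArg (· P) (congrArg DFunLike.coe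
      (algHom_ext (f := φ.toIntAlgHom.comp (aeval b)) (g := ψ.toIntAlgHom.comp f)
        fun j => by simp [hb]))
  have hker : ∀ᶠ i in l, RingHom.ker f ≤ RingHom.ker (ev i) :=
    eventually_le_ker_of_fg hφ ev (IsNoetherian.noetherian _) fun P hP => by
      rw [RingHom.mem_ker] at hP ⊢
      change φ (fun i => ev i P) = 0
      rw [hev, hP, map_zero]
  -- `RingHom.liftOfRightInverse` is definitionally `x ↦ ev i (surjInv hf x)`.
  refine ⟨fun i x => ev i (Function.surjInv hf x), hker.mono fun i hi =>
    ⟨RingHom.liftOfRightInverse (f : MvPolynomial (Fin n) ℤ →+* A) _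
      (Function.rightInverse_surjInv hf) ⟨ev i, hi⟩, rfl⟩, fun x => ?_⟩
  rw [hev, Function.surjInv_eq hf]

end Ultraproduct

theorem exists_approximation_homs_general (U : Ultrafilter Nat.Primes)
    (φ : (∀ p : Nat.Primes, AlgebraicClosure (ZMod p)) →+* ℂ)
    (hφs : Function.Surjective φ)
    (hφ : ∀ a b, (φ a = φ b ↔ {p | a p = b p} ∈ U))
    (A : Subalgebra ℤ ℂ) (hA : A.FG) :
    ∃ γ : ∀ p : Nat.Primes, A → AlgebraicClosure (ZMod p),
      {p | γ p 1 = 1 ∧ (∀ x y : A, γ p (x + y) = γ p x + γ p y) ∧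
          (∀ x y : A, γ p (x * y) = γ p x * γ p y)} ∈ U ∧
      ∀ x : A, φ (fun p => γ p x) = (x : ℂ) := by
  have : Algebra.FiniteType ℤ A := (Subalgebra.fg_iff_finiteType A).mp hA
  have hφ_zero (a) (ha : φ a = 0) : ∀ᶠ p in (U : Filter Nat.Primes), a p = 0 :=
    (hφ a 0).mp (by rw [ha, map_zero])
  obtain ⟨γ, hγ, hφγ⟩ := exists_eventually_ringHom_of_finiteType hφs hφ_zero A.val.toRingHom
  refine ⟨γ, hγ.mono ?_, hφγ⟩
  rintro p ⟨g, hg⟩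
  rw [← hg]
  exact ⟨map_one g, map_add g, map_mul g⟩

/-- Given a non-principal ultrafilter on the primes and a fixed identification of the
ultraproduct of the `F̄_p` with `ℂ` (encoded by a surjective ring homomorphism `φ` from
the product onto `ℂ` identifying exactly almost-everywhere-equal families), every
finitely generated `ℤ`-subalgebra `A ⊆ ℂ` admits homomorphisms `γ_p : A → F̄_p`, defined
for almost all `p`, such that `x = ulim_p γ_p x` for all `x ∈ A`. -/
theorem exists_approximation_homs (U : Ultrafilter Nat.Primes)
    (hU : ∀ S : Set Nat.Primes, S.Finite → S ∉ U)
    (φ : (∀ p : Nat.Primes, AlgebraicClosure (ZMod p)) →+* ℂ)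
    (hφs : Function.Surjective φ)
    (hφ : ∀ a b, (φ a = φ b ↔ {p | a p = b p} ∈ U))
    (A : Subalgebra ℤ ℂ) (hA : A.FG) :
    ∃ γ : ∀ p : Nat.Primes, A → AlgebraicClosure (ZMod p),
      {p | γ p 1 = 1 ∧ (∀ x y : A, γ p (x + y) = γ p x + γ p y) ∧
          (∀ x y : A, γ p (x * y) = γ p x * γ p y)} ∈ U ∧
      ∀ x : A, φ (fun p => γ p x) = (x : ℂ) :=
  exists_approximation_homs_general U φ hφs hφ A hA
end
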